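/- Let C = Σ_{j=1}^k T_j be a sum of multiplication terms, S a set of linear forms, and Q_1, Q_2 ⊆ [k] with Q_1 ∩ Q_2 ≠ ∅. If all linear forms of sim(C_{Q_1}) and all linear forms of sim(C_{Q_2}) lie in sp(S), then all linear forms of sim(C_{Q_1 ∪ Q_2}) lie in sp(S). -/
import Mathlib


open scoped Classical

noncomputable def simiCount {F : Type*} [Field F] {n : ℕ}
    (ℓ : Fin n → F) (S : Multiset (Fin n → F)) : ℕ :=
  Multiset.card (S.filter (fun m => ∃ c : F, c ≠ 0 ∧ m = c • ℓ))


private lemma simiCount_rel {F : Type*} [Field F] {n : ℕ} (m : Fin n → F)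
    {s t : Multiset (Fin n → F)}
    (h : Multiset.Rel (fun u v => ∃ e : F, e ≠ 0 ∧ v = e • u) s t) :
    simiCount m s = simiCount m t := by
  unfold simiCount
  induction h with
  | zero => rfl
  | @cons a b s t hab h ih =>
    obtain ⟨e, he, rfl⟩ := hab
    have key : (∃ c : F, c ≠ 0 ∧ a = c • m) ↔ (∃ c : F, c ≠ 0 ∧ e • a = c • m) := by
      constructor
      · rintro ⟨c, hc, rfl⟩
        exact ⟨e * c, mul_ne_zero he hc, (smul_smul e c m)⟩

      · rintro ⟨c, hc, hh⟩
        refine ⟨e⁻¹ * c, mul_ne_zero (inv_ne_zero he) hc, ?_⟩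
        rw [mul_smul, ← hh, smul_smul, inv_mul_cancel₀ he, one_smul]
    rw [Multiset.filter_cons, Multiset.filter_cons]
    by_cases hp : ∃ c : F, c ≠ 0 ∧ a = c • m
    · rw [if_pos hp, if_pos (key.mp hp)]
      simp [ih]
    · rw [if_neg hp, if_neg (fun hh => hp (key.mpr hh))]
      simpa using ih

private lemma simiCount_sub {F : Type*} [Field F] {n : ℕ} (m : Fin n → F)
    {s t : Multiset (Fin n → F)} (h : t ≤ s) :
    simiCount m (s - t) = simiCount m s - simiCount m t := by
  unfold simiCount
  rw [Multiset.filter_sub, Multiset.card_sub (Multiset.filter_le_filter _ h)]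

private lemma simiCount_le {F : Type*} [Field F] {n : ℕ} (m : Fin n → F)
    {s t : Multiset (Fin n → F)} (h : t ≤ s) :
    simiCount m t ≤ simiCount m s :=
  Multiset.card_le_card (Multiset.filter_le_filter _ h)

private lemma mem_span_of_simiCount_pos {F : Type*} [Field F] {n : ℕ}
    {m : Fin n → F} {s : Multiset (Fin n → F)} (h : 0 < simiCount m s)
    (S : Set (Fin n → F)) (hs : ∀ v ∈ s, v ∈ Submodule.span F S) :
    m ∈ Submodule.span F S := by
  obtain ⟨v, hv⟩ := Multiset.card_pos_iff_exists_mem.mp h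
  rw [Multiset.mem_filter] at hv
  obtain ⟨hvs, c, hc, rfl⟩ := hv
  have := hs _ hvs
  have h2 := Submodule.smul_mem _ c⁻¹ this
  rwa [smul_smul, inv_mul_cancel₀ hc, one_smul] at h2

/-- if `Q₁ ∩ Q₂ ≠ ∅`, and all forms of `sim(C_{Q₁})` and of
`sim(C_{Q₂})` lie in `sp(S)`, then all forms of `sim(C_{Q₁ ∪ Q₂})` lie in `sp(S)`.
Simple parts are encoded via their gcd data, as in Statement 12. -/
theorem stmt13 {F : Type*} [Field F] {n k : ℕ}
    (α : Fin k → F) (hα : ∀ q, α q ≠ 0)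
    (L : Fin k → Multiset (Fin n → F)) (hnz : ∀ q, ∀ m ∈ L q, m ≠ 0)
    (Q1 Q2 : Finset (Fin k)) (hQ12 : (Q1 ∩ Q2).Nonempty)
    (U1 : Multiset (Fin n → F)) (U1q : Fin k → Multiset (Fin n → F))
    (hsub1 : ∀ q ∈ Q1, U1q q ≤ L q)
    (hsim1 : ∀ q ∈ Q1, Multiset.Rel (fun u v => ∃ e : F, e ≠ 0 ∧ v = e • u) U1 (U1q q))
    (hmax1 : ∀ m : Fin n → F, m ≠ 0 → ∃ q ∈ Q1, simiCount m (L q - U1q q) = 0)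
    (U2 : Multiset (Fin n → F)) (U2q : Fin k → Multiset (Fin n → F))
    (hsub2 : ∀ q ∈ Q2, U2q q ≤ L q)
    (hsim2 : ∀ q ∈ Q2, Multiset.Rel (fun u v => ∃ e : F, e ≠ 0 ∧ v = e • u) U2 (U2q q))
    (hmax2 : ∀ m : Fin n → F, m ≠ 0 → ∃ q ∈ Q2, simiCount m (L q - U2q q) = 0)
    (U12 : Multiset (Fin n → F)) (U12q : Fin k → Multiset (Fin n → F))
    (hsub12 : ∀ q ∈ Q1 ∪ Q2, U12q q ≤ L q)
    (hsim12 : ∀ q ∈ Q1 ∪ Q2,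
      Multiset.Rel (fun u v => ∃ e : F, e ≠ 0 ∧ v = e • u) U12 (U12q q))
    (hmax12 : ∀ m : Fin n → F, m ≠ 0 → ∃ q ∈ Q1 ∪ Q2, simiCount m (L q - U12q q) = 0)
    (S : Set (Fin n → F))
    (hS1 : ∀ q ∈ Q1, ∀ m ∈ L q - U1q q, m ∈ Submodule.span F S)
    (hS2 : ∀ q ∈ Q2, ∀ m ∈ L q - U2q q, m ∈ Submodule.span F S) :
    ∀ q ∈ Q1 ∪ Q2, ∀ m ∈ L q - U12q q, m ∈ Submodule.span F S := by
  intro q hq m hm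
  have hmL : m ∈ L q := Multiset.mem_of_le (Multiset.sub_le_self _ _) hm
  have hm0 : m ≠ 0 := hnz q m hmL
  -- if the simple part of C_{Q1} contains a form similar to m, we are done
  by_cases h1 : ∃ p ∈ Q1, 0 < simiCount m (L p - U1q p)
  · obtain ⟨p, hp, hpos⟩ := h1
    exact mem_span_of_simiCount_pos hpos S (hS1 p hp)
  by_cases h2 : ∃ p ∈ Q2, 0 < simiCount m (L p - U2q p)
  · obtain ⟨p, hp, hpos⟩ := h2
    exact mem_span_of_simiCount_pos hpos S (hS2 p hp)
  -- otherwise derive a contradiction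
  exfalso
  push_neg at h1 h2
  -- simiCount m (L p) is constant on Q1 and on Q2
  have key1 : ∀ p ∈ Q1, simiCount m (L p) = simiCount m U1 := by
    intro p hp
    have hz := h1 p hp
    rw [Nat.le_zero, simiCount_sub m (hsub1 p hp)] at hz
    have hle := simiCount_le m (hsub1 p hp)
    have : simiCount m (L p) = simiCount m (U1q p) := le_antisymm (by omega) hle
    rw [this, simiCount_rel m (hsim1 p hp)]
  have key2 : ∀ p ∈ Q2, simiCount m (L p) = simiCount m U2 := by
    intro p hp
    have hz := h2 p hp
    rw [Nat.le_zero, simiCount_sub m (hsub2 p hp)] at hz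
    have hle := simiCount_le m (hsub2 p hp)
    have : simiCount m (L p) = simiCount m (U2q p) := le_antisymm (by omega) hle
    rw [this, simiCount_rel m (hsim2 p hp)]
  obtain ⟨p0, hp0⟩ := hQ12
  rw [Finset.mem_inter] at hp0
  have hc12 : simiCount m U1 = simiCount m U2 := by
    rw [← key1 p0 hp0.1, key2 p0 hp0.2]
  have keyU : ∀ p ∈ Q1 ∪ Q2, simiCount m (L p) = simiCount m U1 := by
    intro p hp
    rcases Finset.mem_union.mp hp with h | h
    · exact key1 p h
    · rw [key2 p h, hc12]
  -- the count in L q strictly exceeds simiCount m U12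
  have hmemf : m ∈ (L q - U12q q).filter (fun v => ∃ c : F, c ≠ 0 ∧ v = c • m) :=
    Multiset.mem_filter.mpr ⟨hm, 1, one_ne_zero, (one_smul F m).symm⟩
  have hqpos : 0 < simiCount m (L q - U12q q) :=
    Multiset.card_pos_iff_exists_mem.mpr ⟨m, hmemf⟩
  have hqU : simiCount m (U12q q) = simiCount m U12 :=
    (simiCount_rel m (hsim12 q hq)).symm
  have hqgt : simiCount m U12 < simiCount m (L q) := by
    rw [simiCount_sub m (hsub12 q hq), hqU] at hqpos
    omega
  -- but by maximality there is q0 where the count equals simiCount m U12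
  obtain ⟨q0, hq0, hq0z⟩ := hmax12 m hm0
  rw [simiCount_sub m (hsub12 q0 hq0),
    (simiCount_rel m (hsim12 q0 hq0)).symm.trans rfl] at hq0z
  have hle0 := simiCount_le m (hsub12 q0 hq0)
  have hq0U : simiCount m (U12q q0) = simiCount m U12 :=
    (simiCount_rel m (hsim12 q0 hq0)).symm
  have hq0eq : simiCount m (L q0) = simiCount m U12 := by omega
  have e1 := keyU q hq
  have e2 := keyU q0 hq0
  omega
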